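/- arXiv:1202.5597 — 4 statements merged into one kernel-verified Lean document; each statement's English description precedes it below -/
import Mathlib

section
/- With the block matrix setup of Theorem 1, for any vectors y, ŷ ∈ ℝᵐ and y_O ∈ ℝⁿ, define μ̂ = [C k] M⁻¹ (y_O, ŷ) and μ = [C k] M⁻¹ (y_O, y). Then μ - μ̂ = (k - C A⁻¹ Bᵀ) D (y - ŷ), and consequently |μ - μ̂| ≤ ‖(k - C A⁻¹ Bᵀ) D‖₂ · ‖y - ŷ‖₂. -/
/-!
The two right-hand sides differ only in their second block, so `μ - μh` is `[C k] M⁻¹ (0, y - yh)`,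
which only sees the last block column `(-A⁻¹ Bᵀ D; D)` of the Schur-complement formula for `M⁻¹`.
The bound is then Cauchy–Schwarz.
-/

open Matrix

noncomputable def eNorm {m : ℕ} (v : Fin m → ℝ) : ℝ := Real.sqrt (∑ i, (v i) ^ 2)

namespace Matrix

variable {l m n α : Type*} [Fintype m] [Fintype n] [DecidableEq m] [DecidableEq n]
  [CommRing α]

theorem inv_fromBlocks_mulVec_inr (A : Matrix m m α) (B : Matrix m n α) (C : Matrix n m α)
    (D : Matrix n n α) (hA : IsUnit A.det) (hS : IsUnit (D - C * A⁻¹ * B).det) (v : n → α) :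
    (fromBlocks A B C D)⁻¹ *ᵥ Sum.elim 0 v =
      Sum.elim (-(A⁻¹ * B * (D - C * A⁻¹ * B)⁻¹) *ᵥ v) ((D - C * A⁻¹ * B)⁻¹ *ᵥ v) := by
  let := A.invertibleOfIsUnitDet hA
  let : Invertible (D - C * ⅟A * B) := by
    rw [invOf_eq_nonsing_inv]
    exact (D - C * A⁻¹ * B).invertibleOfIsUnitDet hS
  let := fromBlocks₁₁Invertible A B C D
  rw [← invOf_eq_nonsing_inv, invOf_fromBlocks₁₁_eq, fromBlocks_mulVec]
  simp only [Sum.elim_comp_inl, Sum.elim_comp_inr, mulVec_zero, zero_add, invOf_eq_nonsing_inv]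

theorem fromCols_mul_inv_fromBlocks_mulVec_inr (A : Matrix m m α) (B : Matrix m n α)
    (C : Matrix n m α) (D : Matrix n n α) (P : Matrix l m α) (Q : Matrix l n α)
    (hA : IsUnit A.det) (hS : IsUnit (D - C * A⁻¹ * B).det) (v : n → α) :
    (fromCols P Q * (fromBlocks A B C D)⁻¹) *ᵥ Sum.elim 0 v =
      ((Q - P * A⁻¹ * B) * (D - C * A⁻¹ * B)⁻¹) *ᵥ v := by
  rw [← mulVec_mulVec, inv_fromBlocks_mulVec_inr A B C D hA hS, fromCols_mulVec_sumElim,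
    mulVec_mulVec, mulVec_mulVec, ← add_mulVec]
  congr 1
  rw [Matrix.mul_neg, ← Matrix.mul_assoc, ← Matrix.mul_assoc, Matrix.sub_mul]
  abel

end Matrix

theorem abs_dotProduct_le_eNorm_mul_eNorm {m : ℕ} (v w : Fin m → ℝ) :
    |v ⬝ᵥ w| ≤ eNorm v * eNorm w := by
  rw [eNorm, eNorm, ← Real.sqrt_mul (by positivity)]
  exact Real.abs_le_sqrt (Finset.sum_mul_sq_le_sq_mul_sq _ v w)

theorem stmt_1_general (n m : ℕ)
    (A : Matrix (Fin n) (Fin n) ℝ) (B : Matrix (Fin m) (Fin n) ℝ)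
    (C : Matrix (Fin 1) (Fin n) ℝ) (K : Matrix (Fin m) (Fin m) ℝ)
    (k : Matrix (Fin 1) (Fin m) ℝ)
    (hA : IsUnit A.det)
    (hS : IsUnit (K - B * A⁻¹ * Bᵀ).det)
    (D : Matrix (Fin m) (Fin m) ℝ) (hD : D = (K - B * A⁻¹ * Bᵀ)⁻¹)
    (M : Matrix (Fin n ⊕ Fin m) (Fin n ⊕ Fin m) ℝ)
    (hM : M = Matrix.fromBlocks A Bᵀ B K)
    (R : Matrix (Fin 1) (Fin n ⊕ Fin m) ℝ)
    (hR : R = Matrix.fromCols C k)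
    (y yh : Fin m → ℝ) (yO : Fin n → ℝ)
    (μ μh : ℝ)
    (hμ : μ = (R * M⁻¹).mulVec (Sum.elim yO y) 0)
    (hμh : μh = (R * M⁻¹).mulVec (Sum.elim yO yh) 0) :
    μ - μh = ((k - C * A⁻¹ * Bᵀ) * D).mulVec (y - yh) 0
    ∧ |μ - μh| ≤ eNorm (fun i => ((k - C * A⁻¹ * Bᵀ) * D) 0 i) * eNorm (y - yh) := by
  have hdiff : Sum.elim yO y - Sum.elim yO yh = Sum.elim (0 : Fin n → ℝ) (y - yh) := by
    ext (i | i) <;> simp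
  have key : μ - μh = ((k - C * A⁻¹ * Bᵀ) * D).mulVec (y - yh) 0 := by
    rw [hμ, hμh, ← Pi.sub_apply, ← mulVec_sub, hdiff, hR, hM, hD,
      fromCols_mul_inv_fromBlocks_mulVec_inr A Bᵀ B K C k hA hS]
  exact ⟨key, key ▸ abs_dotProduct_le_eNorm_mul_eNorm _ _⟩

/-- Theorem 2 (first part): GP posterior mean estimation error identity and bound. -/
theorem stmt_1 (n m : ℕ)
    (A : Matrix (Fin n) (Fin n) ℝ) (B : Matrix (Fin m) (Fin n) ℝ)
    (C : Matrix (Fin 1) (Fin n) ℝ) (K : Matrix (Fin m) (Fin m) ℝ)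
    (k : Matrix (Fin 1) (Fin m) ℝ)
    (hA : IsUnit A.det)
    (hS : IsUnit (K - B * A⁻¹ * Bᵀ).det)
    (D : Matrix (Fin m) (Fin m) ℝ) (hD : D = (K - B * A⁻¹ * Bᵀ)⁻¹)
    (M : Matrix (Fin n ⊕ Fin m) (Fin n ⊕ Fin m) ℝ)
    (hM : M = Matrix.fromBlocks A Bᵀ B K)
    (hMinv : IsUnit M.det)
    (R : Matrix (Fin 1) (Fin n ⊕ Fin m) ℝ)
    (hR : R = Matrix.fromCols C k)
    (y yh : Fin m → ℝ) (yO : Fin n → ℝ)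
    (μ μh : ℝ)
    (hμ : μ = (R * M⁻¹).mulVec (Sum.elim yO y) 0)
    (hμh : μh = (R * M⁻¹).mulVec (Sum.elim yO yh) 0) :
    μ - μh = ((k - C * A⁻¹ * Bᵀ) * D).mulVec (y - yh) 0
    ∧ |μ - μh| ≤ eNorm (fun i => ((k - C * A⁻¹ * Bᵀ) * D) 0 i) * eNorm (y - yh) :=
  stmt_1_general n m A B C K k hA hS D hD M hM R hR y yh yO μ μh hμ hμh
end

section
/- Let g(Δ, σ) = -Δ·Φ(-Δ/σ) + σ·φ(Δ/σ). Fix σ > 0 and real numbers y_max, μ, μ̂, y, ŷ with |μ - μ̂| ≤ ρ·|y - ŷ| for some ρ ≥ 0. Set Δ = max(y_max, y) - μ and Δ̂ = max(y_max, ŷ) - μ̂. Then |g(Δ, σ) - g(Δ̂, σ)| ≤ (1/2)(1 + ρ)·|y - ŷ|. -/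
open MeasureTheory

/-- Standard normal density. -/
noncomputable def stdPdf (s : ℝ) : ℝ := (Real.sqrt (2 * Real.pi))⁻¹ * Real.exp (-s ^ 2 / 2)

/-- Standard normal CDF. -/
noncomputable def stdCdf (t : ℝ) : ℝ := ∫ s in Set.Iic t, stdPdf s

/-- Expected improvement function g(Δ, σ) = -Δ·Φ(-Δ/σ) + σ·φ(Δ/σ). -/
noncomputable def EIfun (Δ σ : ℝ) : ℝ := -Δ * stdCdf (-Δ / σ) + σ * stdPdf (Δ / σ)

/-
The improvement function g(·, σ) has derivative -Φ(-Δ/σ): differentiating Φ and φ produces the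
terms Δ·φ(Δ/σ)/σ and -Δ·φ(Δ/σ)/σ, which cancel. For Δ ≥ 0 this derivative lies in [-1/2, 0], so
g(·, σ) is 1/2-Lipschitz on [0, ∞). Finally Δ - Δ̂ = (max(y_max, y) - max(y_max, ŷ)) - (μ - μ̂)
has absolute value at most |y - ŷ| + ρ|y - ŷ|.
-/

lemma stdPdf_eq_gaussianPDFReal : stdPdf = ProbabilityTheory.gaussianPDFReal 0 1 := by
  ext s
  simp [stdPdf, ProbabilityTheory.gaussianPDFReal]

lemma continuous_stdPdf : Continuous stdPdf := by
  unfold stdPdf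
  fun_prop

lemma stdPdf_nonneg (s : ℝ) : 0 ≤ stdPdf s := by
  unfold stdPdf
  positivity

lemma stdPdf_neg (s : ℝ) : stdPdf (-s) = stdPdf s := by
  simp [stdPdf]

lemma integrable_stdPdf : Integrable stdPdf :=
  stdPdf_eq_gaussianPDFReal ▸ ProbabilityTheory.integrable_gaussianPDFReal 0 1

lemma integral_stdPdf : ∫ s, stdPdf s = 1 :=
  stdPdf_eq_gaussianPDFReal ▸ ProbabilityTheory.integral_gaussianPDFReal_eq_one 0 one_ne_zero

lemma hasDerivAt_stdPdf (s : ℝ) : HasDerivAt stdPdf (-s * stdPdf s) s := by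
  have hexp : HasDerivAt (fun s : ℝ => -s ^ 2 / 2) (-s) s := by
    exact ((hasDerivAt_pow 2 s).neg.div_const 2).congr_deriv (by ring)
  unfold stdPdf
  exact (hexp.exp.const_mul _).congr_deriv (by ring)

lemma stdCdf_nonneg (t : ℝ) : 0 ≤ stdCdf t :=
  setIntegral_nonneg measurableSet_Iic fun s _ => stdPdf_nonneg s

lemma monotone_stdCdf : Monotone stdCdf := fun _ _ hab =>
  setIntegral_mono_set integrable_stdPdf.integrableOn (ae_of_all _ stdPdf_nonneg)
    (ae_of_all _ fun _ hs => le_trans hs hab)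

lemma stdCdf_zero : stdCdf 0 = 1 / 2 := by
  have hsplit : stdCdf 0 + ∫ s in Set.Ioi 0, stdPdf s = 1 := by
    rw [stdCdf, ← integral_stdPdf, ← setIntegral_union (Set.Iic_disjoint_Ioi le_rfl)
      measurableSet_Ioi integrable_stdPdf.integrableOn integrable_stdPdf.integrableOn,
      Set.Iic_union_Ioi, setIntegral_univ]
  have hsymm : stdCdf 0 = ∫ s in Set.Ioi 0, stdPdf s := by
    rw [stdCdf, ← neg_zero, ← integral_comp_neg_Iic, neg_zero]
    simp_rw [stdPdf_neg]
  linarith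

lemma stdCdf_le_half {t : ℝ} (ht : t ≤ 0) : stdCdf t ≤ 1 / 2 :=
  stdCdf_zero ▸ monotone_stdCdf ht

lemma hasDerivAt_stdCdf (t : ℝ) : HasDerivAt stdCdf (stdPdf t) t := by
  have hsplit : ∀ x, stdCdf 0 + ∫ s in (0 : ℝ)..x, stdPdf s = stdCdf x := fun x => by
    rw [stdCdf, stdCdf, ← intervalIntegral.integral_Iic_sub_Iic integrable_stdPdf.integrableOn
      integrable_stdPdf.integrableOn, add_sub_cancel]
  have hFTC := intervalIntegral.integral_hasDerivAt_right integrable_stdPdf.intervalIntegrable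
    (continuous_stdPdf.stronglyMeasurableAtFilter _ _) continuous_stdPdf.continuousAt
    (a := 0) (b := t)
  simpa only [hsplit] using hFTC.const_add (stdCdf 0)

lemma hasDerivAt_EIfun (σ x : ℝ) :
    HasDerivAt (fun Δ => EIfun Δ σ) (-stdCdf (-x / σ)) x := by
  have hcdf := (hasDerivAt_stdCdf (-x / σ)).comp x ((hasDerivAt_id x).neg.div_const σ)
  have hpdf := (hasDerivAt_stdPdf (x / σ)).comp x ((hasDerivAt_id x).div_const σ)
  refine (((hasDerivAt_id x).neg.mul hcdf).add (hpdf.const_mul σ)).congr_deriv ?_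
  simp only [Function.comp_apply, Pi.neg_apply, id_eq, neg_div, stdPdf_neg]
  -- at σ = 0 the junk value x / 0 = 0 makes g(Δ, 0) = -Δ / 2, and the formula still holds
  rcases eq_or_ne σ 0 with rfl | hσ
  · simp
  · field_simp
    ring

lemma abs_EIfun_sub_le {σ a b : ℝ} (hσ : 0 ≤ σ) (ha : 0 ≤ a) (hb : 0 ≤ b) :
    |EIfun a σ - EIfun b σ| ≤ 1 / 2 * |a - b| := by
  have hderiv_le : ∀ x ∈ Set.Ici (0 : ℝ), ‖-stdCdf (-x / σ)‖ ≤ 1 / 2 := fun x hx => by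
    rw [norm_neg, Real.norm_of_nonneg (stdCdf_nonneg _)]
    exact stdCdf_le_half (div_nonpos_of_nonpos_of_nonneg (neg_nonpos_of_nonneg hx) hσ)
  simpa only [Real.norm_eq_abs] using (convex_Ici 0).norm_image_sub_le_of_norm_hasDerivWithin_le
    (fun x _ => (hasDerivAt_EIfun σ x).hasDerivWithinAt) hderiv_le hb ha

lemma abs_max_sub_sub_max_sub_le {m y yh μ μh ρ : ℝ} (hμ : |μ - μh| ≤ ρ * |y - yh|) :
    |(max m y - μ) - (max m yh - μh)| ≤ (1 + ρ) * |y - yh| := by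
  have hmax : |max m y - max m yh| ≤ |y - yh| := by
    simpa only [max_comm m] using abs_max_sub_max_le_abs y yh m
  calc |(max m y - μ) - (max m yh - μh)| = |(max m y - max m yh) - (μ - μh)| := by ring_nf
    _ ≤ |max m y - max m yh| + |μ - μh| := abs_sub _ _
    _ ≤ (1 + ρ) * |y - yh| := by linarith

theorem stmt_6_general (σ ρ ymax μ μh y yh Δ Δh : ℝ)
    (hσ : 0 < σ)
    (hμ : |μ - μh| ≤ ρ * |y - yh|)
    (hΔ : Δ = max ymax y - μ) (hΔh : Δh = max ymax yh - μh)
    (hΔ0 : 0 ≤ Δ) (hΔh0 : 0 ≤ Δh) :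
    |EIfun Δ σ - EIfun Δh σ| ≤ (1 / 2) * (1 + ρ) * |y - yh| := by
  have hgap : |Δ - Δh| ≤ (1 + ρ) * |y - yh| := hΔ ▸ hΔh ▸ abs_max_sub_sub_max_sub_le hμ
  calc |EIfun Δ σ - EIfun Δh σ| ≤ 1 / 2 * |Δ - Δh| := abs_EIfun_sub_le hσ.le hΔ0 hΔh0
    _ ≤ 1 / 2 * ((1 + ρ) * |y - yh|) := by gcongr
    _ = 1 / 2 * (1 + ρ) * |y - yh| := by ring

/-- Lemma 1: EI perturbation bound, |g(Δ,σ) - g(Δ̂,σ)| ≤ (1/2)(1+ρ)|y - ŷ|. -/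
theorem stmt_6 (σ ρ ymax μ μh y yh Δ Δh : ℝ)
    (hσ : 0 < σ) (hρ : 0 ≤ ρ)
    (hμ : |μ - μh| ≤ ρ * |y - yh|)
    (hΔ : Δ = max ymax y - μ) (hΔh : Δh = max ymax yh - μh)
    (hΔ0 : 0 ≤ Δ) (hΔh0 : 0 ≤ Δh) :
    |EIfun Δ σ - EIfun Δh σ| ≤ (1 / 2) * (1 + ρ) * |y - yh| :=
  stmt_6_general σ ρ ymax μ μh y yh Δ Δh hσ hμ hΔ hΔh hΔ0 hΔh0
end

section
/- Suppose g, ĝ : ℝᵈ → ℝ satisfy sup_z |g(z) - ĝ(z)| ≤ ε, x* maximizes g, x maximizes ĝ, and ĝ is C² with -Hess ĝ ⪰ Σ_min·I on the segment [x, x*] for some Σ_min > 0. Then ‖x* - x‖₂² ≤ 4ε/Σ_min. -/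
/-- Theorem 3 (abstract form): if sup|g - ĝ| ≤ ε, x* maximizes g, x maximizes ĝ,
    ĝ is C² with -Hess ĝ ⪰ Σ_min·I on the segment [x, x*], then
    ‖x* - x‖² ≤ 4ε/Σ_min. -/
theorem stmt_9 (d : ℕ) (g gh : EuclideanSpace ℝ (Fin d) → ℝ) (ε : ℝ)
    (hclose : ∀ z, |g z - gh z| ≤ ε)
    (x xstar : EuclideanSpace ℝ (Fin d))
    (hxstar : ∀ z, g z ≤ g xstar)
    (hx : ∀ z, gh z ≤ gh x)
    (hC2 : ContDiff ℝ 2 gh)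
    (Smin : ℝ) (hS : 0 < Smin)
    (hHess : ∀ α : ℝ, α ∈ Set.Icc (0 : ℝ) 1 →
      ∀ v : EuclideanSpace ℝ (Fin d),
        (fderiv ℝ (fderiv ℝ gh) ((1 - α) • x + α • xstar) v) v ≤ -Smin * ‖v‖ ^ 2) :
    ‖xstar - x‖ ^ 2 ≤ 4 * ε / Smin := by
  set v : EuclideanSpace ℝ (Fin d) := xstar - x with hv
  set L : ℝ → EuclideanSpace ℝ (Fin d) := fun α => x + α • v with hL
  have hL0 : L 0 = x := by simp [hL]
  have hL1 : L 1 = xstar := by simp [hL, hv]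
  have hLpt : ∀ α : ℝ, (1 - α) • x + α • xstar = L α := by
    intro α; simp only [hL, hv]; module
  have hdL : ∀ α : ℝ, HasDerivAt L v α := by
    intro α
    simpa [hL] using ((hasDerivAt_id α).smul_const v).const_add x
  have hgh_diff : Differentiable ℝ gh := hC2.differentiable (by norm_num)
  set D : ℝ → ℝ := fun α => fderiv ℝ gh (L α) v with hD
  have hφ : ∀ α : ℝ, HasDerivAt (fun t => gh (L t)) (D α) α := by
    intro α
    exact ((hgh_diff (L α)).hasFDerivAt).comp_hasDerivAt α (hdL α)
  have hgh' : Differentiable ℝ (fderiv ℝ gh) := by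
    have h1 : ContDiff ℝ 1 (fderiv ℝ gh) := hC2.fderiv_right (by norm_num)
    exact h1.differentiable one_ne_zero
  set H : ℝ → ℝ := fun α => (fderiv ℝ (fderiv ℝ gh) (L α) v) v with hH
  have hD' : ∀ α : ℝ, HasDerivAt D (H α) α := by
    intro α
    have h1 : HasDerivAt (fun t => fderiv ℝ gh (L t))
        (fderiv ℝ (fderiv ℝ gh) (L α) v) α :=
      ((hgh' (L α)).hasFDerivAt).comp_hasDerivAt α (hdL α)
    have h2 := h1.clm_apply (hasDerivAt_const α v)
    simpa using h2
  have hD0 : D 0 = 0 := by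
    have hmax : IsLocalMax (fun t => gh (L t)) 0 :=
      Filter.Eventually.of_forall (fun t => by simpa [hL0] using hx (L t))
    exact hmax.hasDerivAt_eq_zero (hφ 0)
  have hHb : ∀ α ∈ Set.Icc (0 : ℝ) 1, H α ≤ -Smin * ‖v‖ ^ 2 := by
    intro α hα
    have := hHess α hα v
    rwa [hLpt α] at this
  -- q = derivative of (φ + S‖v‖²/2 α²)
  set q : ℝ → ℝ := fun α => D α + Smin * ‖v‖ ^ 2 * α with hq
  have hq' : ∀ α, HasDerivAt q (H α + Smin * ‖v‖ ^ 2) α := by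
    intro α
    have h := (hD' α).add ((hasDerivAt_id α).const_mul (Smin * ‖v‖ ^ 2))
    simp only [id_eq, id, mul_one] at h
    exact h
  have hqdiff : Differentiable ℝ q := fun α => (hq' α).differentiableAt
  have hqanti : AntitoneOn q (Set.Icc 0 1) := by
    apply antitoneOn_of_deriv_nonpos (convex_Icc 0 1)
      hqdiff.continuous.continuousOn hqdiff.differentiableOn
    intro t ht
    rw [interior_Icc] at ht
    rw [(hq' t).deriv]
    have := hHb t ⟨le_of_lt ht.1, le_of_lt ht.2⟩
    nlinarith
  have hq0 : q 0 = 0 := by simp [hq, hD0]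
  have hqle : ∀ α ∈ Set.Icc (0 : ℝ) 1, q α ≤ 0 := by
    intro α hα
    have := hqanti (Set.left_mem_Icc.mpr zero_le_one) hα hα.1
    linarith [hq0 ▸ this]
  set ψ : ℝ → ℝ := fun α => gh (L α) + Smin * ‖v‖ ^ 2 / 2 * α ^ 2 with hψ
  have hψ' : ∀ α, HasDerivAt ψ (q α) α := by
    intro α
    have h2 : HasDerivAt (fun t : ℝ => t ^ 2) (2 * α) α := by
      simpa using (hasDerivAt_pow 2 α)
    have h3 := (hφ α).add (h2.const_mul (Smin * ‖v‖ ^ 2 / 2))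
    exact h3.congr_deriv (show D α + Smin * ‖v‖ ^ 2 / 2 * (2 * α) = D α + Smin * ‖v‖ ^ 2 * α by ring)
  have hψdiff : Differentiable ℝ ψ := fun α => (hψ' α).differentiableAt
  have hψanti : AntitoneOn ψ (Set.Icc 0 1) := by
    apply antitoneOn_of_deriv_nonpos (convex_Icc 0 1)
      hψdiff.continuous.continuousOn hψdiff.differentiableOn
    intro t ht
    rw [interior_Icc] at ht
    rw [(hψ' t).deriv]
    exact hqle t ⟨le_of_lt ht.1, le_of_lt ht.2⟩
  have hkey : ψ 1 ≤ ψ 0 :=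
    hψanti (Set.left_mem_Icc.mpr zero_le_one) (Set.right_mem_Icc.mpr zero_le_one)
      zero_le_one
  have hψ0 : ψ 0 = gh x := by simp [hψ, hL0]
  have hψ1 : ψ 1 = gh xstar + Smin * ‖v‖ ^ 2 / 2 := by simp [hψ, hL1]
  have hgap : gh x - gh xstar ≤ 2 * ε := by
    have h1 := abs_le.mp (hclose x)
    have h2 := abs_le.mp (hclose xstar)
    have h3 := hxstar x
    linarith [h1.1, h1.2, h2.1, h2.2]
  have hfinal : Smin * ‖v‖ ^ 2 / 2 ≤ 2 * ε := by
    rw [hψ0, hψ1] at hkey; linarith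
  rw [le_div_iff₀ hS]
  have : ‖xstar - x‖ = ‖v‖ := by rw [hv]
  nlinarith [this]
end

section
/- With m = 1 (single new query), the expected absolute mean change satisfies E[|μ_{z|O,x} - μ̂_{z|O,x}|] = |k(z,x₁*) - C A⁻¹ Bᵀ| · D · √(2/π) · σ_{x₁*|O}, where the expectation is over y ~ N(μ_{x₁*|O}, σ²_{x₁*|O}) and ŷ = μ_{x₁*|O}. -/
open Matrix MeasureTheory ProbabilityTheory Real Set
open scoped NNReal

/-!
The posterior mean is affine in the new observation: inverting `M` blockwise through the Schur
complement `σ² = K - B A⁻¹ Bᵀ`, replacing `ŷ` by `y` changes the mean by exactly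
`(k(z,x₁*) - C A⁻¹ Bᵀ) σ⁻² (y - ŷ)`. The expectation therefore reduces to the mean absolute
deviation of a Gaussian, `E|y - ŷ| = √(2/π) σ`, which comes from `∫₀^∞ x e^{-x²/2σ²} dx = σ²`.
-/

theorem integral_Ioi_mul_exp_neg_mul_sq {b : ℝ} (hb : 0 < b) :
    ∫ x in Ioi 0, x * exp (-b * x ^ 2) = (2 * b)⁻¹ := by
  have h := integral_mul_cexp_neg_mul_sq (b := (b : ℂ)) (by simpa using hb)
  simp_rw [show ∀ r : ℝ, (r : ℂ) * .exp (-b * r ^ 2) = ((r * exp (-b * r ^ 2) : ℝ) : ℂ) by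
    intro r; push_cast; rfl, integral_complex_ofReal] at h
  exact_mod_cast h

theorem integral_abs_sub_gaussianReal (μ : ℝ) (v : ℝ≥0) :
    ∫ x, |x - μ| ∂gaussianReal μ v = √(2 / π) * √v := by
  rcases eq_or_ne v 0 with rfl | hv
  · simp [gaussianReal_zero_var]
  have hv' : (0 : ℝ) < v := by positivity
  set c := (√(2 * π * v))⁻¹
  calc ∫ x, |x - μ| ∂gaussianReal μ v
      = ∫ x, gaussianPDFReal 0 v (x - μ) * |x - μ| := by
        simp [integral_gaussianReal_eq_integral_smul hv, gaussianPDFReal_sub]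
    _ = ∫ x, c * (|x| * exp (-(2 * (v : ℝ))⁻¹ * |x| ^ 2)) := by
        rw [integral_sub_right_eq_self (fun x => gaussianPDFReal 0 v x * |x|)]
        congr 1 with x
        rw [gaussianPDFReal, sq_abs, sub_zero, neg_div, div_eq_inv_mul, neg_mul]
        ring
    _ = 2 * c * (2 * (2 * (v : ℝ))⁻¹)⁻¹ := by
        rw [integral_comp_abs (f := fun x => c * (x * exp (-(2 * (v : ℝ))⁻¹ * x ^ 2))),
          integral_const_mul, integral_Ioi_mul_exp_neg_mul_sq (by positivity), mul_assoc]
    _ = √(2 / π) * √v := by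
        have hsqrt : √(2 * π * v) = √(2 / π) * √v * π := by
          rw [show 2 * π * v = 2 / π * v * π ^ 2 by field_simp, sqrt_mul (by positivity),
            sqrt_mul (by positivity), sqrt_sq pi_pos.le]
        have : 0 < √(2 / π) * √v := by positivity
        simp only [c, hsqrt]
        field_simp
        rw [sq_sqrt (by positivity), sq_sqrt hv'.le]
        field_simp

section BlockInverse

variable {l m n α : Type*} [Fintype m] [Fintype n] [DecidableEq m] [DecidableEq n] [CommRing α]
  {A : Matrix m m α} {B : Matrix m n α} {C : Matrix n m α} {D : Matrix n n α}

theorem inv_fromBlocks_mulVec_sumElim_zero (hA : IsUnit A.det)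
    (hS : IsUnit (D - C * A⁻¹ * B).det) (v : n → α) :
    (fromBlocks A B C D)⁻¹ *ᵥ Sum.elim 0 v =
      Sum.elim (-(A⁻¹ * B * (D - C * A⁻¹ * B)⁻¹) *ᵥ v) ((D - C * A⁻¹ * B)⁻¹ *ᵥ v) := by
  let := invertibleOfIsUnitDet A hA
  let := invertibleOfIsUnitDet _ hS
  let := fromBlocks₁₁Invertible A B C D
  rw [← invOf_eq_nonsing_inv, invOf_fromBlocks₁₁_eq, fromBlocks_mulVec]
  simp [invOf_eq_nonsing_inv]

theorem fromCols_mul_inv_fromBlocks_mulVec_sub (hA : IsUnit A.det)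
    (hS : IsUnit (D - C * A⁻¹ * B).det) (E : Matrix l m α) (F : Matrix l n α) (u : m → α)
    (v w : n → α) :
    (fromCols E F * (fromBlocks A B C D)⁻¹) *ᵥ Sum.elim u v -
        (fromCols E F * (fromBlocks A B C D)⁻¹) *ᵥ Sum.elim u w =
      ((F - E * A⁻¹ * B) * (D - C * A⁻¹ * B)⁻¹) *ᵥ (v - w) := by
  have hsub : Sum.elim u v - Sum.elim u w = Sum.elim (0 : m → α) (v - w) := by
    ext (i | i) <;> simp
  rw [← mulVec_sub, hsub, ← mulVec_mulVec, inv_fromBlocks_mulVec_sumElim_zero hA hS,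
    fromCols_mulVec_sumElim]
  simp only [Matrix.sub_mul, sub_mulVec, neg_mulVec, mulVec_neg, mulVec_mulVec, Matrix.mul_assoc]
  abel

end BlockInverse

theorem stmt_14_general {Ω : Type*} [MeasurableSpace Ω] (P : Measure Ω)
    (n : ℕ)
    (A : Matrix (Fin n) (Fin n) ℝ) (B C : Matrix (Fin 1) (Fin n) ℝ)
    (K kz : Matrix (Fin 1) (Fin 1) ℝ)
    (hA : IsUnit A.det)
    (M : Matrix (Fin n ⊕ Fin 1) (Fin n ⊕ Fin 1) ℝ)
    (hM : M = Matrix.fromBlocks A Bᵀ B K)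
    (R : Matrix (Fin 1) (Fin n ⊕ Fin 1) ℝ)
    (hR : R = Matrix.fromCols C kz)
    (σ D : ℝ) (hσ : 0 < σ)
    (hσ2 : σ ^ 2 = (K - B * A⁻¹ * Bᵀ) 0 0)
    (hD : D = 1 / σ ^ 2)
    (yO : Fin n → ℝ) (μ₁ : ℝ)
    (Y : Ω → ℝ) (hmeas : Measurable Y)
    (hgauss : P.map Y = gaussianReal μ₁ ⟨σ ^ 2, sq_nonneg _⟩)
    (μ : Ω → ℝ) (μh : ℝ)
    (hμ : ∀ ω, μ ω = (R * M⁻¹).mulVec (Sum.elim yO (fun _ => Y ω)) 0)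
    (hμh : μh = (R * M⁻¹).mulVec (Sum.elim yO (fun _ => μ₁)) 0) :
    ∫ ω, |μ ω - μh| ∂P
      = |kz 0 0 - (C * A⁻¹ * Bᵀ) 0 0| * D * Real.sqrt (2 / Real.pi) * σ := by
  set c := kz 0 0 - (C * A⁻¹ * Bᵀ) 0 0
  have hS : IsUnit (K - B * A⁻¹ * Bᵀ).det := by
    rw [det_fin_one, ← hσ2]
    exact (pow_pos hσ 2).ne'.isUnit
  have hdiff : ∀ ω, μ ω - μh = c * D * (Y ω - μ₁) := by
    intro ω
    have := congrFun (fromCols_mul_inv_fromBlocks_mulVec_sub hA hS C kz yO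
      (fun _ => Y ω) (fun _ => μ₁)) 0
    rw [← hM, ← hR] at this
    rw [hμ, hμh, ← Pi.sub_apply, this, hD, hσ2]
    simp [mulVec, dotProduct, c, Ring.inverse_eq_inv']
  have hD0 : 0 ≤ D := by rw [hD]; positivity
  have hY : HasLaw Y (gaussianReal μ₁ ⟨σ ^ 2, sq_nonneg _⟩) P := ⟨hmeas.aemeasurable, hgauss⟩
  have hmean_abs_dev : ∫ ω, |Y ω - μ₁| ∂P = √(2 / π) * σ := by
    rw [← Function.comp_def (fun x => |x - μ₁|) Y, hY.integral_comp (by fun_prop)]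
    convert integral_abs_sub_gaussianReal μ₁ ⟨σ ^ 2, sq_nonneg _⟩ using 2
    exact (sqrt_sq hσ.le).symm
  simp_rw [hdiff, abs_mul, abs_of_nonneg hD0, integral_const_mul, hmean_abs_dev]
  ring

/-- Single new query (m = 1): the expected absolute GP posterior mean change equals
    |k(z,x₁*) − C A⁻¹ Bᵀ| · D · √(2/π) · σ, where the expectation is over
    y ~ N(μ_{x₁*|O}, σ²) and ŷ = μ_{x₁*|O}. -/
theorem stmt_14 {Ω : Type*} [MeasurableSpace Ω] (P : Measure Ω) [IsProbabilityMeasure P]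
    (n : ℕ)
    (A : Matrix (Fin n) (Fin n) ℝ) (B C : Matrix (Fin 1) (Fin n) ℝ)
    (K kz : Matrix (Fin 1) (Fin 1) ℝ)
    (hA : IsUnit A.det)
    (M : Matrix (Fin n ⊕ Fin 1) (Fin n ⊕ Fin 1) ℝ)
    (hM : M = Matrix.fromBlocks A Bᵀ B K)
    (hMinv : IsUnit M.det)
    (R : Matrix (Fin 1) (Fin n ⊕ Fin 1) ℝ)
    (hR : R = Matrix.fromCols C kz)
    (σ D : ℝ) (hσ : 0 < σ)
    (hσ2 : σ ^ 2 = (K - B * A⁻¹ * Bᵀ) 0 0)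
    (hD : D = 1 / σ ^ 2)
    (yO : Fin n → ℝ) (μ₁ : ℝ) (hμ₁ : μ₁ = (B * A⁻¹).mulVec yO 0)
    (Y : Ω → ℝ) (hmeas : Measurable Y)
    (hgauss : P.map Y = gaussianReal μ₁ ⟨σ ^ 2, sq_nonneg _⟩)
    (μ : Ω → ℝ) (μh : ℝ)
    (hμ : ∀ ω, μ ω = (R * M⁻¹).mulVec (Sum.elim yO (fun _ => Y ω)) 0)
    (hμh : μh = (R * M⁻¹).mulVec (Sum.elim yO (fun _ => μ₁)) 0) :
    ∫ ω, |μ ω - μh| ∂P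
      = |kz 0 0 - (C * A⁻¹ * Bᵀ) 0 0| * D * Real.sqrt (2 / Real.pi) * σ :=
  stmt_14_general P n A B C K kz hA M hM R hR σ D hσ hσ2 hD yO μ₁ Y hmeas hgauss μ μh hμ hμh
end
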